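/- Let p be an odd prime and let n1, n2 be nonnegative integers with n1 + n2 ≤ p−1. If n1 + 2·n2 ≤ p−1 then Δ^{1,2}(n1,n2,p) = (−1)^{n1+n2}·C(n1+n2, n1), and if n1 + 2·n2 ≥ p−1 then Δ^{1,2}(n1,n2,p) = (−1)^{n2}·C(p−1−n2, n1). -/

import Mathlib

open Finset

/-- `Acount p i1 i2 n1 n2 i` is the number of pairs `(X1, X2)` of disjoint subsets of
the nonzero residues mod `p` with `|X1| = n1`, `|X2| = n2` and
`i1·ΣX1 + i2·ΣX2 = i` in `ℤ/p`. -/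
def Acount (p : ℕ) [NeZero p] (i1 i2 n1 n2 : ℕ) (i : ZMod p) : ℕ :=
  (((((Finset.univ.erase (0 : ZMod p)).powersetCard n1) ×ˢ
      ((Finset.univ.erase (0 : ZMod p)).powersetCard n2)).filter
    (fun X => X.1 ∩ X.2 = ∅ ∧
      (i1 : ZMod p) * X.1.sum id + (i2 : ZMod p) * X.2.sum id = i))).card

/-- `Δ^{i1,i2}(n1,n2,p) = A_0^{i1,i2}(n1,n2,p) - A_1^{i1,i2}(n1,n2,p)`. -/
def Delta (p : ℕ) [NeZero p] (i1 i2 n1 n2 : ℕ) : ℤ :=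
  (Acount p i1 i2 n1 n2 0 : ℤ) - (Acount p i1 i2 n1 n2 1 : ℤ)

/-!
Over all of `ℤ/p`, translating both sets by `t` shifts the weighted sum `ΣX₁ + 2ΣX₂` by
`(n₁ + 2n₂)t`; so for `0 < n₁ + 2n₂ < p` every residue is hit equally often and the signed
count over `ℤ/p` vanishes. Sorting the pairs according to whether `0` lies in `X₁`, in `X₂` or
in neither turns this into the Pascal-type recurrence
`Δ(n₁, n₂) = -Δ(n₁ - 1, n₂) - Δ(n₁, n₂ - 1)`, which gives the first formula.
Since the nonzero residues sum to `0`, replacing `X₂` by the complement of `X₁ ∪ X₂` negates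
the weighted sum, and negating both sets restores it; hence `Δ(n₁, n₂) = Δ(n₁, p - 1 - n₁ - n₂)`,
which carries the second region onto the first.
-/

section DisjointPairs

variable {R : Type*} [CommRing R] [DecidableEq R]

def disjointPairs (S : Finset R) (a b : R) (n₁ n₂ : ℕ) (i : R) : Finset (Finset R × Finset R) :=
  {X ∈ S.powersetCard n₁ ×ˢ S.powersetCard n₂ |
    Disjoint X.1 X.2 ∧ a * ∑ x ∈ X.1, x + b * ∑ x ∈ X.2, x = i}

variable {S T : Finset R} {a b z : R} {n₁ n₂ : ℕ} {i : R}

theorem mem_disjointPairs {X : Finset R × Finset R} :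
    X ∈ disjointPairs S a b n₁ n₂ i ↔
      X.1 ⊆ S ∧ #X.1 = n₁ ∧ X.2 ⊆ S ∧ #X.2 = n₂ ∧ Disjoint X.1 X.2 ∧
        a * ∑ x ∈ X.1, x + b * ∑ x ∈ X.2, x = i := by
  simp [disjointPairs, mem_powersetCard, and_assoc]

theorem card_filter_disjointPairs_swap (P : Finset R × Finset R → Prop) [DecidablePred P] :
    #{X ∈ disjointPairs S a b n₁ n₂ i | P X} = #{X ∈ disjointPairs S b a n₂ n₁ i | P X.swap} := by
  have hmaps {a b : R} {n₁ n₂ : ℕ} {Q : Finset R × Finset R → Prop} [DecidablePred Q] :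
      Set.MapsTo (Prod.swap : Finset R × Finset R → _)
        ({X ∈ disjointPairs S a b n₁ n₂ i | Q X} : Finset _)
        ({X ∈ disjointPairs S b a n₂ n₁ i | Q X.swap} : Finset _) := by
    intro X hX
    obtain ⟨hX, hQ⟩ := mem_filter.mp (mem_coe.mp hX)
    obtain ⟨h₁S, h₁, h₂S, h₂, hdisj, hsum⟩ := mem_disjointPairs.mp hX
    exact mem_filter.mpr
      ⟨mem_disjointPairs.mpr ⟨h₂S, h₂, h₁S, h₁, hdisj.symm, (add_comm _ _).trans hsum⟩, hQ⟩
  exact card_nbij' Prod.swap Prod.swap hmaps hmaps (fun _ _ => rfl) (fun _ _ => rfl)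

theorem card_disjointPairs_comm :
    #(disjointPairs S a b n₁ n₂ i) = #(disjointPairs S b a n₂ n₁ i) := by
  simpa using card_filter_disjointPairs_swap (S := S) (a := a) (b := b) (n₁ := n₁) (n₂ := n₂)
    (i := i) (fun _ => True)

theorem card_filter_mem_fst_disjointPairs_insert (hz : z ∉ S) :
    #{X ∈ disjointPairs (insert z S) a b n₁ n₂ i | z ∈ X.1} =
      if n₁ = 0 then 0 else #(disjointPairs S a b (n₁ - 1) n₂ (i - a * z)) := by
  rcases n₁ with _ | n₁
  · simp only [if_true, card_eq_zero, filter_eq_empty_iff]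
    intro X hX hzX
    obtain ⟨-, h₁, -⟩ := mem_disjointPairs.mp hX
    simp [card_eq_zero.mp h₁] at hzX
  rw [if_neg n₁.add_one_ne_zero, Nat.add_sub_cancel]
  refine card_nbij' (fun X => (X.1.erase z, X.2)) (fun X => (insert z X.1, X.2)) ?_ ?_ ?_ ?_
  · intro X hX
    obtain ⟨hX, hzX⟩ := mem_filter.mp hX
    obtain ⟨h₁S, h₁, h₂S, h₂, hdisj, hsum⟩ := mem_disjointPairs.mp hX
    have hzX₂ : z ∉ X.2 := disjoint_left.mp hdisj hzX
    refine mem_disjointPairs.mpr ⟨?_, ?_, ?_, h₂, hdisj.mono_left (erase_subset z X.1), ?_⟩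
    · simpa [subset_insert_iff] using h₁S
    · simp [card_erase_of_mem hzX, h₁]
    · exact (subset_insert_iff_of_notMem hzX₂).mp h₂S
    · rw [← hsum, ← add_sum_erase X.1 _ hzX]
      ring
  · intro X hX
    obtain ⟨h₁S, h₁, h₂S, h₂, hdisj, hsum⟩ := mem_disjointPairs.mp hX
    have hzX₁ : z ∉ X.1 := fun h => hz (h₁S h)
    have hzX₂ : z ∉ X.2 := fun h => hz (h₂S h)
    refine mem_filter.mpr ⟨mem_disjointPairs.mpr ⟨insert_subset_insert z h₁S, ?_,
      h₂S.trans (subset_insert z S), h₂, disjoint_insert_left.mpr ⟨hzX₂, hdisj⟩, ?_⟩,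
      mem_insert_self z X.1⟩
    · rw [card_insert_of_notMem hzX₁, h₁]
    · rw [sum_insert hzX₁]
      linear_combination hsum
  · intro X hX
    exact Prod.ext (insert_erase (mem_filter.mp hX).2) rfl
  · intro X hX
    have hzX : z ∉ X.1 := fun h => hz ((mem_disjointPairs.mp hX).1 h)
    exact Prod.ext (erase_insert hzX) rfl

theorem card_filter_mem_snd_disjointPairs_insert (hz : z ∉ S) :
    #{X ∈ disjointPairs (insert z S) a b n₁ n₂ i | z ∈ X.2} =
      if n₂ = 0 then 0 else #(disjointPairs S a b n₁ (n₂ - 1) (i - b * z)) := by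
  rw [card_filter_disjointPairs_swap, card_disjointPairs_comm]
  exact card_filter_mem_fst_disjointPairs_insert hz

theorem card_disjointPairs_insert (hz : z ∉ S) :
    #(disjointPairs (insert z S) a b n₁ n₂ i) =
      #(disjointPairs S a b n₁ n₂ i) +
        (if n₁ = 0 then 0 else #(disjointPairs S a b (n₁ - 1) n₂ (i - a * z))) +
        (if n₂ = 0 then 0 else #(disjointPairs S a b n₁ (n₂ - 1) (i - b * z))) := by
  set B := disjointPairs (insert z S) a b n₁ n₂ i
  rw [← card_filter_mem_fst_disjointPairs_insert hz, ← card_filter_mem_snd_disjointPairs_insert hz,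
    ← card_filter_add_card_filter_not (s := B) (fun X => z ∈ X.1),
    ← card_filter_add_card_filter_not (s := {X ∈ B | z ∉ X.1}) (fun X => z ∈ X.2)]
  have h_snd : {X ∈ {X ∈ B | z ∉ X.1} | z ∈ X.2} = {X ∈ B | z ∈ X.2} := by
    rw [filter_filter]
    refine filter_congr fun X hX => ⟨And.right, fun hzX => ⟨?_, hzX⟩⟩
    exact disjoint_right.mp (mem_disjointPairs.mp hX).2.2.2.2.1 hzX
  have h_none : {X ∈ {X ∈ B | z ∉ X.1} | z ∉ X.2} = disjointPairs S a b n₁ n₂ i := by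
    ext X
    simp only [filter_filter, mem_filter, B, mem_disjointPairs]
    constructor
    · rintro ⟨⟨h₁S, h₁, h₂S, h₂, hrest⟩, hz₁, hz₂⟩
      exact ⟨(subset_insert_iff_of_notMem hz₁).mp h₁S, h₁,
        (subset_insert_iff_of_notMem hz₂).mp h₂S, h₂, hrest⟩
    · rintro ⟨h₁S, h₁, h₂S, h₂, hrest⟩
      exact ⟨⟨h₁S.trans (subset_insert z S), h₁, h₂S.trans (subset_insert z S), h₂, hrest⟩,
        fun h => hz (h₁S h), fun h => hz (h₂S h)⟩
  rw [h_snd, h_none]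
  ring

theorem card_disjointPairs_le_of_affine {α β : R} (hα : IsUnit α)
    (hST : ∀ x ∈ S, α * x + β ∈ T) :
    #(disjointPairs S a b n₁ n₂ i) ≤
      #(disjointPairs T a b n₁ n₂ (α * i + (a * n₁ + b * n₂) * β)) := by
  let f : R ↪ R := ⟨fun x => α * x + β, fun x y h => hα.mul_left_cancel (add_right_cancel h)⟩
  have hf (x : R) : f x = α * x + β := rfl
  have sum_map_f (Y : Finset R) : ∑ x ∈ Y.map f, x = α * ∑ x ∈ Y, x + #Y * β := by
    simp [hf, sum_add_distrib, mul_sum]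
  refine card_le_card_of_injOn (fun X => (X.1.map f, X.2.map f)) (fun X hX => ?_) ?_
  · obtain ⟨h₁S, h₁, h₂S, h₂, hdisj, hsum⟩ := mem_disjointPairs.mp hX
    refine mem_disjointPairs.mpr ⟨?_, by simpa, ?_, by simpa, by simpa, ?_⟩
    · simpa [hf, subset_iff] using fun x hx => hST x (h₁S hx)
    · simpa [hf, subset_iff] using fun x hx => hST x (h₂S hx)
    · rw [sum_map_f, sum_map_f, h₁, h₂, ← hsum]
      ring
  · intro X _ Y _ h
    simp only [Prod.mk.injEq, map_inj] at h
    exact Prod.ext h.1 h.2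

theorem card_disjointPairs_neg (hS : ∀ x ∈ S, -x ∈ S) :
    #(disjointPairs S a b n₁ n₂ (-i)) = #(disjointPairs S a b n₁ n₂ i) := by
  have key (j : R) : #(disjointPairs S a b n₁ n₂ j) ≤ #(disjointPairs S a b n₁ n₂ (-j)) := by
    simpa using card_disjointPairs_le_of_affine (i := j) (β := 0) isUnit_one.neg
      (fun x hx => by simpa using hS x hx)
  exact le_antisymm (by simpa using key (-i)) (key i)

theorem card_disjointPairs_univ_eq [Fintype R] (hc : IsUnit (a * n₁ + b * n₂)) (i j : R) :
    #(disjointPairs univ a b n₁ n₂ i) = #(disjointPairs univ a b n₁ n₂ j) := by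
  have key (i j : R) : #(disjointPairs univ a b n₁ n₂ i) ≤ #(disjointPairs univ a b n₁ n₂ j) := by
    obtain ⟨β, hβ⟩ := hc.dvd (a := j - i)
    have := card_disjointPairs_le_of_affine (S := univ) (a := a) (b := b) (n₁ := n₁) (n₂ := n₂)
      (i := i) (β := β) isUnit_one (fun x _ => mem_univ (1 * x + β))
    rwa [one_mul, ← hβ, add_sub_cancel] at this
  exact le_antisymm (key i j) (key j i)

theorem card_disjointPairs_le_compl (hS : ∑ x ∈ S, x = 0) :
    #(disjointPairs S a (2 * a) n₁ n₂ i) ≤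
      #(disjointPairs S a (2 * a) n₁ (#S - n₁ - n₂) (-i)) := by
  refine card_le_card_of_injOn (fun X => (X.1, S \ (X.1 ∪ X.2))) (fun X hX => ?_) ?_
  · obtain ⟨h₁S, h₁, h₂S, h₂, hdisj, hsum⟩ := mem_disjointPairs.mp hX
    have hU : X.1 ∪ X.2 ⊆ S := union_subset h₁S h₂S
    refine mem_disjointPairs.mpr ⟨h₁S, h₁, sdiff_subset, ?_, ?_, ?_⟩
    · rw [card_sdiff_of_subset hU, card_union_of_disjoint hdisj, h₁, h₂]
      omega
    · exact disjoint_sdiff.mono_left subset_union_left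
    · rw [sum_sdiff_eq_sub hU, hS, sum_union hdisj, ← hsum]
      ring
  · intro X hX Y hY h
    obtain ⟨h₁S, -, h₂S, -, hdX, -⟩ := mem_disjointPairs.mp hX
    obtain ⟨h₁S', -, h₂S', -, hdY, -⟩ := mem_disjointPairs.mp hY
    obtain ⟨h₁, h₂⟩ := Prod.mk.inj h
    have hU : X.1 ∪ X.2 = Y.1 ∪ Y.2 := by
      rw [← Finset.sdiff_sdiff_eq_self (union_subset h₁S h₂S), h₂,
        Finset.sdiff_sdiff_eq_self (union_subset h₁S' h₂S')]
    refine Prod.ext h₁ ?_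
    rw [← union_sdiff_cancel_left hdX, ← union_sdiff_cancel_left hdY, hU, h₁]

theorem card_disjointPairs_compl (hS : ∑ x ∈ S, x = 0) (h : n₁ + n₂ ≤ #S) :
    #(disjointPairs S a (2 * a) n₁ (#S - n₁ - n₂) (-i)) = #(disjointPairs S a (2 * a) n₁ n₂ i) := by
  refine le_antisymm ?_ (card_disjointPairs_le_compl hS)
  simpa [show #S - n₁ - (#S - n₁ - n₂) = n₂ by omega] using
    card_disjointPairs_le_compl (a := a) (n₁ := n₁) (n₂ := #S - n₁ - n₂) (i := -i) hS

def signedCount (S : Finset R) (a b : R) (n₁ n₂ : ℕ) : ℤ :=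
  #(disjointPairs S a b n₁ n₂ 0) - #(disjointPairs S a b n₁ n₂ 1)

theorem signedCount_zero_zero [Nontrivial R] : signedCount S a b 0 0 = 1 := by
  simp [signedCount, disjointPairs, filter_singleton]

theorem signedCount_erase_zero_eq [Fintype R] (hc : IsUnit (a * n₁ + b * n₂)) :
    signedCount (univ.erase 0) a b n₁ n₂ =
      -(if n₁ = 0 then 0 else signedCount (univ.erase 0) a b (n₁ - 1) n₂) -
        (if n₂ = 0 then 0 else signedCount (univ.erase 0) a b n₁ (n₂ - 1)) := by
  have h_insert (i : R) := card_disjointPairs_insert (S := univ.erase 0) (a := a) (b := b)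
    (n₁ := n₁) (n₂ := n₂) (i := i) (notMem_erase 0 univ)
  have h₀ := h_insert 0
  have h₁ := h_insert 1
  rw [insert_erase (mem_univ 0), card_disjointPairs_univ_eq hc 0 1] at h₀
  rw [insert_erase (mem_univ 0)] at h₁
  simp only [signedCount, mul_zero, sub_zero] at h₀ h₁ ⊢
  split_ifs at h₀ h₁ ⊢ <;> omega

theorem signedCount_compl (hneg : ∀ x ∈ S, -x ∈ S) (hS : ∑ x ∈ S, x = 0) (h : n₁ + n₂ ≤ #S) :
    signedCount S a (2 * a) n₁ (#S - n₁ - n₂) = signedCount S a (2 * a) n₁ n₂ := by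
  rw [signedCount, signedCount, ← card_disjointPairs_neg (i := 1) hneg,
    ← card_disjointPairs_compl hS h, ← card_disjointPairs_compl hS h, neg_zero]

end DisjointPairs

theorem delta_eq_signedCount (p : ℕ) [NeZero p] (i₁ i₂ n₁ n₂ : ℕ) :
    Delta p i₁ i₂ n₁ n₂ = signedCount (univ.erase 0) (i₁ : ZMod p) i₂ n₁ n₂ := by
  simp [Delta, Acount, signedCount, disjointPairs, disjoint_iff_inter_eq_empty]

section ZMod

variable {p : ℕ} [NeZero p] [Fact p.Prime]

theorem sum_univ_erase_zero_zmod (hp : p ≠ 2) : ∑ x ∈ univ.erase (0 : ZMod p), x = 0 := by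
  rw [sum_erase univ (f := fun x : ZMod p => x) rfl]
  simpa using FiniteField.sum_pow_lt_card_sub_one (K := ZMod p) 1 (by
    have := (Fact.out : p.Prime).two_le
    rw [ZMod.card]; omega)

theorem signedCount_one_two_of_lt {n₁ n₂ : ℕ} (h : n₁ + 2 * n₂ < p) :
    signedCount (univ.erase (0 : ZMod p)) 1 2 n₁ n₂ = (-1) ^ (n₁ + n₂) * (n₁ + n₂).choose n₁ := by
  set D := signedCount (univ.erase (0 : ZMod p)) 1 2
  have hrec (n₁ n₂ : ℕ) (hpos : 0 < n₁ + 2 * n₂) (hlt : n₁ + 2 * n₂ < p) :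
      D n₁ n₂ = -(if n₁ = 0 then 0 else D (n₁ - 1) n₂) - (if n₂ = 0 then 0 else D n₁ (n₂ - 1)) := by
    have hc : IsUnit ((1 : ZMod p) * n₁ + 2 * n₂) := by
      refine isUnit_iff_ne_zero.mpr ?_
      rw [one_mul]
      exact_mod_cast (ZMod.natCast_eq_zero_iff _ p).not.mpr (Nat.not_dvd_of_pos_of_lt hpos hlt)
    exact signedCount_erase_zero_eq hc
  induction n₂ generalizing n₁ with
  | zero =>
    induction n₁ with
    | zero => simpa using (signedCount_zero_zero : D 0 0 = 1)
    | succ n₁ ih =>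
      rw [hrec (n₁ + 1) 0 (by omega) h, if_neg n₁.add_one_ne_zero, if_pos rfl,
        Nat.add_sub_cancel, ih (by omega)]
      simp [pow_succ]
  | succ n₂ ihn₂ =>
    induction n₁ with
    | zero =>
      rw [hrec 0 (n₂ + 1) (by omega) h, if_neg n₂.add_one_ne_zero, if_pos rfl,
        Nat.add_sub_cancel, ihn₂ (by omega)]
      simp [pow_succ]
    | succ n₁ ih =>
      rw [hrec (n₁ + 1) (n₂ + 1) (by omega) h, if_neg n₁.add_one_ne_zero,
        if_neg n₂.add_one_ne_zero, Nat.add_sub_cancel, Nat.add_sub_cancel, ih (by omega),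
        ihn₂ (by omega), show n₁ + 1 + (n₂ + 1) = n₁ + (n₂ + 1) + 1 by omega,
        show n₁ + 1 + n₂ = n₁ + (n₂ + 1) by omega, Nat.choose_succ_succ', pow_succ]
      push_cast
      ring

end ZMod

/-- Closed formulas for `Δ^{1,2}(n1,n2,p)` in the two halves of the
finite Pascal triangle. -/
theorem rarefaction_stmt14 (p : ℕ) [NeZero p] (hp : p.Prime) (hodd : Odd p)
    (n1 n2 : ℕ) (hsum : n1 + n2 ≤ p - 1) :
    (n1 + 2 * n2 ≤ p - 1 →
      Delta p 1 2 n1 n2 = (-1) ^ (n1 + n2) * (n1 + n2).choose n1) ∧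
    (p - 1 ≤ n1 + 2 * n2 →
      Delta p 1 2 n1 n2 = (-1) ^ n2 * (p - 1 - n2).choose n1) := by
  have := Fact.mk hp
  have hp₂ := hp.two_le
  have hδ : Delta p 1 2 n1 n2 = signedCount (univ.erase (0 : ZMod p)) 1 2 n1 n2 := by
    simpa using delta_eq_signedCount p 1 2 n1 n2
  have hcard : #(univ.erase (0 : ZMod p)) = p - 1 := by simp [card_erase_of_mem]
  refine ⟨fun h => ?_, fun h => ?_⟩
  · rw [hδ, signedCount_one_two_of_lt (by omega)]
  have hp_ne_two : p ≠ 2 := by rintro rfl; exact absurd hodd (by decide)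
  have hcompl := signedCount_compl (a := (1 : ZMod p)) (n₁ := n1) (n₂ := n2)
    (fun x hx => by simpa using hx) (sum_univ_erase_zero_zmod hp_ne_two) (hcard ▸ hsum)
  rw [mul_one, hcard] at hcompl
  rw [hδ, ← hcompl, signedCount_one_two_of_lt (by omega),
    show n1 + (p - 1 - n1 - n2) = p - 1 - n2 by omega]
  congr 1
  refine neg_one_pow_congr ?_
  rw [Nat.even_sub (by omega)]
  exact iff_true_left (Nat.Odd.sub_odd hodd odd_one)
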